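/- arXiv:1511.08963 — 6 statements merged into one kernel-verified Lean document; each statement's English description precedes it below -/
import Mathlib

section
/- Let X be a centered Gaussian vector with positive definite covariance, fix j, and for S ⊆ [p] \ {j} let β_j(S) denote the L² projection coefficients of X_j onto {X_i : i ∈ S} and m_j(S) := supp(β_j(S)). If T_1, T_2 ⊆ [p] \ {j} satisfy β_j(T_1) = β_j(T_2) = β_j(S), then β_j(T_1 ∪ T_2) = β_j(S). (Invariant sets are closed under union.) -/
/-!
The residual `r = X_j - ∑ βᵢ Xᵢ` of a least-squares fit on `T` is orthogonal in `L²` to every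
`Xᵢ` with `i ∈ T` (first-order condition). If `β` is the fit on both `T₁` and `T₂`, its residual is
therefore orthogonal to `Xᵢ` for all `i ∈ T₁ ∪ T₂`, so by Pythagoras any competitor `β'` supported
on `T₁ ∪ T₂` has residual of squared norm `‖r‖² + ‖∑ (βᵢ - β'ᵢ) Xᵢ‖²`. A minimiser on `T₁ ∪ T₂`
must kill the second term, and linear independence of the `Xᵢ` (positive definite covariance)
forces `β' = β`.
-/

open MeasureTheory ProbabilityTheory

section LeastSquares

variable {E : Type*} [NormedAddCommGroup E] [InnerProductSpace ℝ E] {ι : Type*} [Fintype ι]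

def IsLeastSquaresOn (x : ι → E) (y : E) (T : Finset ι) (β : ι → ℝ) : Prop :=
  (∀ i ∉ T, β i = 0) ∧
    ∀ β' : ι → ℝ, (∀ i ∉ T, β' i = 0) → ‖y - ∑ i, β i • x i‖ ≤ ‖y - ∑ i, β' i • x i‖

theorem real_inner_eq_zero_of_forall_norm_le_norm_sub_smul {r v : E}
    (h : ∀ t : ℝ, ‖r‖ ≤ ‖r - t • v‖) : inner ℝ r v = 0 := by
  have hquad : ∀ t : ℝ, 0 ≤ ‖v‖ ^ 2 * (t * t) + (-2 * inner ℝ r v) * t + 0 := by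
    intro t
    have hsq := pow_le_pow_left₀ (norm_nonneg r) (h t) 2
    rw [norm_sub_sq_real, inner_smul_right, norm_smul, Real.norm_eq_abs, mul_pow, sq_abs] at hsq
    linarith
  have hdisc := discrim_le_zero hquad
  rw [discrim] at hdisc
  nlinarith [sq_nonneg (inner ℝ r v)]

variable {x : ι → E} {y : E} {T : Finset ι} {β : ι → ℝ}

theorem IsLeastSquaresOn.inner_residual_eq_zero (hβ : IsLeastSquaresOn x y T β) {i : ι}
    (hi : i ∈ T) : inner ℝ (y - ∑ k, β k • x k) (x i) = 0 := by
  classical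
  refine real_inner_eq_zero_of_forall_norm_le_norm_sub_smul fun t => ?_
  have hsupp : ∀ k ∉ T, (β + Pi.single i t : ι → ℝ) k = 0 := fun k hk => by
    rw [Pi.add_apply, hβ.1 k hk, Pi.single_eq_of_ne (ne_of_mem_of_not_mem hi hk).symm, add_zero]
  have hres : y - ∑ k, (β + Pi.single i t : ι → ℝ) k • x k = y - ∑ k, β k • x k - t • x i := by
    have hsingle : ∑ k, (Pi.single i t : ι → ℝ) k • x k = t • x i := by
      rw [Finset.sum_eq_single_of_mem i (Finset.mem_univ i)
        fun k _ hk => by rw [Pi.single_eq_of_ne hk, zero_smul], Pi.single_eq_same]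
    simp only [Pi.add_apply, add_smul, Finset.sum_add_distrib, hsingle]
    abel
  simpa only [hres] using hβ.2 _ hsupp

theorem IsLeastSquaresOn.eq_of_inner_residual_eq_zero (hx : LinearIndependent ℝ x)
    {β' : ι → ℝ} (hβ' : IsLeastSquaresOn x y T β') (hβ : ∀ i ∉ T, β i = 0)
    (horth : ∀ i ∈ T, inner ℝ (y - ∑ k, β k • x k) (x i) = 0) : β' = β := by
  set r := y - ∑ k, β k • x k
  set w := ∑ k, (β k - β' k) • x k
  have hrw : inner ℝ r w = 0 := by
    refine (inner_sum _ _ _).trans (Finset.sum_eq_zero fun k _ => ?_)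
    by_cases hk : k ∈ T
    · rw [inner_smul_right, horth k hk, mul_zero]
    · rw [hβ k hk, hβ'.1 k hk, sub_self, zero_smul, inner_zero_right]
  have hres : y - ∑ k, β' k • x k = r + w := by
    simp only [r, w, sub_smul, Finset.sum_sub_distrib]
    abel
  have hmin : ‖r + w‖ ^ 2 ≤ ‖r‖ ^ 2 := by
    rw [← hres]
    exact pow_le_pow_left₀ (norm_nonneg _) (hβ'.2 β hβ) 2
  have hw : w = 0 := by
    rw [norm_add_sq_real, hrw] at hmin
    exact norm_eq_zero.mp (pow_eq_zero_iff two_ne_zero |>.mp (by nlinarith [sq_nonneg ‖w‖]))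
  funext k
  linarith [Fintype.linearIndependent_iff.mp hx _ hw k]

theorem IsLeastSquaresOn.eq_of_union [DecidableEq ι] (hx : LinearIndependent ℝ x) {T₁ T₂ : Finset ι}
    {βU : ι → ℝ} (h₁ : IsLeastSquaresOn x y T₁ β) (h₂ : IsLeastSquaresOn x y T₂ β)
    (hU : IsLeastSquaresOn x y (T₁ ∪ T₂) βU) : βU = β :=
  hU.eq_of_inner_residual_eq_zero hx
    (fun _ hi => h₁.1 _ fun h => hi (Finset.mem_union_left _ h))
    fun _ hi => (Finset.mem_union.mp hi).elim h₁.inner_residual_eq_zero h₂.inner_residual_eq_zero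

end LeastSquares

section L2

variable {α : Type*} [MeasurableSpace α] {μ : Measure α}

theorem L2.real_inner_eq_integral_mul {v w : Lp ℝ 2 μ} {f g : α → ℝ} (hv : v =ᵐ[μ] f)
    (hw : w =ᵐ[μ] g) : inner ℝ v w = ∫ a, f a * g a ∂μ := by
  rw [L2.inner_def]
  refine integral_congr_ae ?_
  filter_upwards [hv, hw] with a hva hwa
  rw [hva, hwa, real_inner_eq_re_inner, RCLike.inner_apply, conj_trivial, mul_comm]
  rfl

theorem L2.norm_sq_eq_integral_sq {v : Lp ℝ 2 μ} {f : α → ℝ} (hv : v =ᵐ[μ] f) :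
    ‖v‖ ^ 2 = ∫ a, f a ^ 2 ∂μ := by
  rw [← real_inner_self_eq_norm_sq, L2.real_inner_eq_integral_mul hv hv]
  simp only [sq]

theorem Lp.coeFn_sub_sum_smul {ι : Type*} [Fintype ι] {u : ι → Lp ℝ 2 μ} {X : ι → α → ℝ}
    (hu : ∀ i, u i =ᵐ[μ] X i) (j : ι) (β : ι → ℝ) :
    ⇑(u j - ∑ i, β i • u i) =ᵐ[μ] fun a => X j a - ∑ i, β i * X i a := by
  filter_upwards [Lp.coeFn_sub (u j) (∑ i, β i • u i), Lp.coeFn_fun_finsetSum Finset.univ fun i => β i • u i,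
    Filter.eventually_all.2 fun i => Lp.coeFn_smul (β i) (u i), Filter.eventually_all.2 hu]
    with a hsub hsum hsmul hX
  simp only [hsub, Pi.sub_apply, hsum, hsmul, Pi.smul_apply, smul_eq_mul, hX]

end L2

theorem stmt8_general {Ω : Type*} [MeasurableSpace Ω] (μ : Measure Ω)
    (p : ℕ) (X : Fin p → Ω → ℝ)
    (hL2 : ∀ i, MemLp (X i) 2 μ)
    (hposdef : (Matrix.of fun i k => ∫ ω, X i ω * X k ω ∂μ : Matrix (Fin p) (Fin p) ℝ).PosDef)
    (j : Fin p) (T₁ T₂ : Finset (Fin p))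
    (βS βT₁ βT₂ βU : Fin p → ℝ)
    (hβT₁_supp : ∀ i, i ∉ T₁ → βT₁ i = 0)
    (hβT₁_min : ∀ β : Fin p → ℝ, (∀ i, i ∉ T₁ → β i = 0) →
      ∫ ω, (X j ω - ∑ i, βT₁ i * X i ω) ^ 2 ∂μ ≤ ∫ ω, (X j ω - ∑ i, β i * X i ω) ^ 2 ∂μ)
    (hβT₂_supp : ∀ i, i ∉ T₂ → βT₂ i = 0)
    (hβT₂_min : ∀ β : Fin p → ℝ, (∀ i, i ∉ T₂ → β i = 0) →
      ∫ ω, (X j ω - ∑ i, βT₂ i * X i ω) ^ 2 ∂μ ≤ ∫ ω, (X j ω - ∑ i, β i * X i ω) ^ 2 ∂μ)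
    (hβU_supp : ∀ i, i ∉ T₁ ∪ T₂ → βU i = 0)
    (hβU_min : ∀ β : Fin p → ℝ, (∀ i, i ∉ T₁ ∪ T₂ → β i = 0) →
      ∫ ω, (X j ω - ∑ i, βU i * X i ω) ^ 2 ∂μ ≤ ∫ ω, (X j ω - ∑ i, β i * X i ω) ^ 2 ∂μ)
    (h₁ : βT₁ = βS) (h₂ : βT₂ = βS) :
    βU = βS := by
  subst h₁ h₂
  set x : Fin p → Lp ℝ 2 μ := fun i => (hL2 i).toLp (X i)
  have hx : ∀ i, x i =ᵐ[μ] X i := fun i => (hL2 i).coeFn_toLp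
  have hsq : ∀ β : Fin p → ℝ,
      ∫ ω, (X j ω - ∑ i, β i * X i ω) ^ 2 ∂μ = ‖x j - ∑ i, β i • x i‖ ^ 2 := fun β =>
    (L2.norm_sq_eq_integral_sq (Lp.coeFn_sub_sum_smul hx j β)).symm
  have hLS : ∀ (T : Finset (Fin p)) (β : Fin p → ℝ), (∀ i, i ∉ T → β i = 0) →
      (∀ β' : Fin p → ℝ, (∀ i, i ∉ T → β' i = 0) →
        ∫ ω, (X j ω - ∑ i, β i * X i ω) ^ 2 ∂μ ≤ ∫ ω, (X j ω - ∑ i, β' i * X i ω) ^ 2 ∂μ) →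
      IsLeastSquaresOn x (x j) T β := fun T β hsupp hmin =>
    ⟨hsupp, fun β' hβ' => (sq_le_sq₀ (norm_nonneg _) (norm_nonneg _)).1 <| by
      simpa only [hsq] using hmin β' hβ'⟩
  have hgram : Matrix.gram ℝ x = Matrix.of fun i k => ∫ ω, X i ω * X k ω ∂μ := by
    ext i k
    exact L2.real_inner_eq_integral_mul (hx i) (hx k)
  exact (hLS _ _ hβT₁_supp hβT₁_min).eq_of_union
    (Matrix.linearIndependent_of_posDef_gram (hgram ▸ hposdef))
    (hLS _ _ hβT₂_supp hβT₂_min) (hLS _ _ hβU_supp hβU_min)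

/-- Invariant sets are closed under union: for a centered Gaussian vector with positive
definite covariance, if `β_j(T₁) = β_j(T₂) = β_j(S)` then `β_j(T₁ ∪ T₂) = β_j(S)`. -/
theorem stmt8 {Ω : Type*} [MeasurableSpace Ω] (μ : Measure Ω) [IsProbabilityMeasure μ]
    (p : ℕ) (X : Fin p → Ω → ℝ)
    (hmeas : ∀ i, Measurable (X i))
    (hL2 : ∀ i, MemLp (X i) 2 μ)
    (hcentered : ∀ i, ∫ ω, X i ω ∂μ = 0)
    (hgauss : ∀ c : Fin p → ℝ,
      Measure.map (fun ω => ∑ i, c i * X i ω) μ =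
        gaussianReal 0 (∑ i, ∑ k, c i * c k * ∫ ω, X i ω * X k ω ∂μ).toNNReal)
    (hposdef : (Matrix.of fun i k => ∫ ω, X i ω * X k ω ∂μ : Matrix (Fin p) (Fin p) ℝ).PosDef)
    (j : Fin p) (S T₁ T₂ : Finset (Fin p)) (hjS : j ∉ S) (hjT₁ : j ∉ T₁) (hjT₂ : j ∉ T₂)
    (βS βT₁ βT₂ βU : Fin p → ℝ)
    (hβS_supp : ∀ i, i ∉ S → βS i = 0)
    (hβS_min : ∀ β : Fin p → ℝ, (∀ i, i ∉ S → β i = 0) →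
      ∫ ω, (X j ω - ∑ i, βS i * X i ω) ^ 2 ∂μ ≤ ∫ ω, (X j ω - ∑ i, β i * X i ω) ^ 2 ∂μ)
    (hβT₁_supp : ∀ i, i ∉ T₁ → βT₁ i = 0)
    (hβT₁_min : ∀ β : Fin p → ℝ, (∀ i, i ∉ T₁ → β i = 0) →
      ∫ ω, (X j ω - ∑ i, βT₁ i * X i ω) ^ 2 ∂μ ≤ ∫ ω, (X j ω - ∑ i, β i * X i ω) ^ 2 ∂μ)
    (hβT₂_supp : ∀ i, i ∉ T₂ → βT₂ i = 0)
    (hβT₂_min : ∀ β : Fin p → ℝ, (∀ i, i ∉ T₂ → β i = 0) →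
      ∫ ω, (X j ω - ∑ i, βT₂ i * X i ω) ^ 2 ∂μ ≤ ∫ ω, (X j ω - ∑ i, β i * X i ω) ^ 2 ∂μ)
    (hβU_supp : ∀ i, i ∉ T₁ ∪ T₂ → βU i = 0)
    (hβU_min : ∀ β : Fin p → ℝ, (∀ i, i ∉ T₁ ∪ T₂ → β i = 0) →
      ∫ ω, (X j ω - ∑ i, βU i * X i ω) ^ 2 ∂μ ≤ ∫ ω, (X j ω - ∑ i, β i * X i ω) ^ 2 ∂μ)
    (h₁ : βT₁ = βS) (h₂ : βT₂ = βS) :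
    βU = βS :=
  stmt8_general μ p X hL2 hposdef j T₁ T₂ βS βT₁ βT₂ βU hβT₁_supp hβT₁_min hβT₂_supp hβT₂_min
    hβU_supp hβU_min h₁ h₂
end

section
/- Fix a matrix Z ∈ ℝ^{n×m}, a vector θ* ∈ ℝ^m, λ ≥ 0, and a penalty ρ: ℝ^m → [0,∞). For a set S ⊆ [m] define the S-restricted penalized least squares solution set T(y; S) := argmin over θ with supp(θ) ⊆ S of (1/2n)‖y − Zθ‖₂² + ρ(θ), and the bad-noise set W(S) := {w ∈ ℝⁿ : ∃ θ̂ ∈ T(Zθ* + w; S) with supp(θ̂) ≠ supp(θ*)}. If supp(θ*) ⊆ S ⊆ U ⊆ [m], then W(S) ⊆ W(U). -/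
open Matrix

/-- Monotonicity of the bad-noise sets for support-restricted penalized least squares:
if `supp(θ*) ⊆ S ⊆ U`, then `W(S) ⊆ W(U)`. Membership of `w` in `W(S)` is expressed as the
existence of a global minimizer of the `S`-restricted problem whose support differs from
`supp(θ*)`; we assume the `U`-restricted argmin is nonempty. -/
theorem stmt9 (n m : ℕ) (hn : 0 < n)
    (Z : Matrix (Fin n) (Fin m) ℝ) (θstar : Fin m → ℝ)
    (ρ : (Fin m → ℝ) → ℝ) (hρ : ∀ θ, 0 ≤ ρ θ)
    (S U : Finset (Fin m))
    (hsupp : ∀ i, θstar i ≠ 0 → i ∈ S) (hSU : S ⊆ U)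
    (hUargmin : ∀ w : Fin n → ℝ, ∃ θ : Fin m → ℝ, (∀ i, i ∉ U → θ i = 0) ∧
      ∀ θ' : Fin m → ℝ, (∀ i, i ∉ U → θ' i = 0) →
        (1 / (2 * n)) * (∑ k, ((Z.mulVec θstar + w) k - Z.mulVec θ k) ^ 2) + ρ θ ≤
        (1 / (2 * n)) * (∑ k, ((Z.mulVec θstar + w) k - Z.mulVec θ' k) ^ 2) + ρ θ')
    (w : Fin n → ℝ)
    (hwS : ∃ θhat : Fin m → ℝ, (∀ i, i ∉ S → θhat i = 0) ∧
      (∀ θ' : Fin m → ℝ, (∀ i, i ∉ S → θ' i = 0) →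
        (1 / (2 * n)) * (∑ k, ((Z.mulVec θstar + w) k - Z.mulVec θhat k) ^ 2) + ρ θhat ≤
        (1 / (2 * n)) * (∑ k, ((Z.mulVec θstar + w) k - Z.mulVec θ' k) ^ 2) + ρ θ') ∧
      {i | θhat i ≠ 0} ≠ {i | θstar i ≠ 0}) :
    ∃ θhat : Fin m → ℝ, (∀ i, i ∉ U → θhat i = 0) ∧
      (∀ θ' : Fin m → ℝ, (∀ i, i ∉ U → θ' i = 0) →
        (1 / (2 * n)) * (∑ k, ((Z.mulVec θstar + w) k - Z.mulVec θhat k) ^ 2) + ρ θhat ≤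
        (1 / (2 * n)) * (∑ k, ((Z.mulVec θstar + w) k - Z.mulVec θ' k) ^ 2) + ρ θ') ∧
      {i | θhat i ≠ 0} ≠ {i | θstar i ≠ 0} := by
  obtain ⟨ψ, hψU, hψmin⟩ := hUargmin w
  by_cases hψs : {i | ψ i ≠ 0} ≠ {i | θstar i ≠ 0}
  · exact ⟨ψ, hψU, hψmin, hψs⟩
  · push_neg at hψs
    have hψS : ∀ i, i ∉ S → ψ i = 0 := by
      intro i hi
      by_contra h
      have : i ∈ {j | ψ j ≠ 0} := h
      rw [hψs] at this
      exact hi (hsupp i this)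
    obtain ⟨θhat, hθS, hθmin, hθbad⟩ := hwS
    refine ⟨θhat, fun i hi => hθS i (fun hiS => hi (hSU hiS)), ?_, hθbad⟩
    intro θ' hθ'
    exact le_trans (hθmin ψ hψS) (hψmin θ' hθ')
end

section
/- Let ρ: [0,∞) → [0,∞) be concave, nondecreasing, with ρ(0) = 0 and ρ positive on (0,∞), extended coordinate-wise to vectors: ρ(u) = ∑_i ρ(|u_i|). Fix ξ > 0, m, and A ⊆ [m]. If u ∈ ℝ^m with all coordinates nonzero satisfies ρ(u_{Aᶜ}) ≤ ξ ρ(u_A), and M is an index set of the |A| largest coordinates of u in absolute value, then ‖u_{Mᶜ}‖₁ ≤ ξ‖u_M‖₁. -/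
/-!
Concavity with `ρ 0 = 0` makes `ρ x / x` nonincreasing on `(0, ∞)`. Let `q` be the smallest
`|u i|` with `i ∈ M`. Since `M` is a top set of size `|A|`, the cone condition passes from `A`
to `M`: `ρ(u_{Mᶜ}) ≤ ξ ρ(u_M)`. Every coordinate outside `M` has `ρ |u j| / |u j| ≥ ρ q / q`,
every coordinate inside has ratio at most `ρ q / q`, so comparing `ρ` with the linear function
of slope `ρ q / q` on both sides turns the `ρ`-cone into the `ℓ₁`-cone.
-/

open Finset

theorem ConcaveOn.antitoneOn_div_of_map_zero {𝕜 : Type*} [Field 𝕜] [LinearOrder 𝕜]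
    [IsStrictOrderedRing 𝕜] {f : 𝕜 → 𝕜} (hf : ConcaveOn 𝕜 (Set.Ici 0) f) (h0 : f 0 = 0) :
    AntitoneOn (fun x => f x / x) (Set.Ioi 0) := by
  intro x hx y hy hxy
  have hx' : x ∈ Set.Ici (0 : 𝕜) \ {0} := ⟨Set.mem_Ici.2 (le_of_lt hx), ne_of_gt hx⟩
  have hy' : y ∈ Set.Ici (0 : 𝕜) \ {0} := ⟨Set.mem_Ici.2 (le_of_lt hy), ne_of_gt hy⟩
  simpa [slope_def_field, h0] using hf.slope_anti (Set.mem_Ici.2 le_rfl) hx' hy' hxy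

theorem Finset.sum_le_sum_of_card_eq_of_threshold {ι α : Type*} [DecidableEq ι]
    [AddCommMonoid α] [PartialOrder α] [IsOrderedAddMonoid α] {s t : Finset ι} {w : ι → α}
    (c : α) (hst : #s = #t) (hout : ∀ i ∉ t, w i ≤ c) (hin : ∀ i ∈ t, c ≤ w i) :
    ∑ i ∈ s, w i ≤ ∑ i ∈ t, w i := by
  calc ∑ i ∈ s, w i ≤ ∑ i ∈ s ∩ t, w i + #(s \ t) • c := by
        rw [← sum_inter_add_sum_sdiff s t]
        gcongr
        exact sum_le_card_nsmul _ _ _ fun i hi => hout i (mem_sdiff.1 hi).2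
    _ = ∑ i ∈ t ∩ s, w i + #(t \ s) • c := by rw [inter_comm, card_sdiff_comm hst]
    _ ≤ ∑ i ∈ t, w i := by
        rw [← sum_inter_add_sum_sdiff t s]
        gcongr
        exact card_nsmul_le_sum _ _ _ fun i hi => hin i (mem_sdiff.1 hi).1

theorem Finset.sum_compl_le_mul_sum_of_card_eq_of_threshold {ι α : Type*} [Fintype ι]
    [DecidableEq ι] [Ring α] [PartialOrder α] [IsOrderedRing α] {s t : Finset ι} {w : ι → α}
    {ξ : α} (c : α) (hξ : 0 ≤ ξ) (hst : #s = #t) (hout : ∀ i ∉ t, w i ≤ c)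
    (hin : ∀ i ∈ t, c ≤ w i) (hcone : ∑ i ∈ sᶜ, w i ≤ ξ * ∑ i ∈ s, w i) :
    ∑ i ∈ tᶜ, w i ≤ ξ * ∑ i ∈ t, w i := by
  have hsum := sum_le_sum_of_card_eq_of_threshold c hst hout hin
  calc ∑ i ∈ tᶜ, w i = ∑ i, w i - ∑ i ∈ t, w i := eq_sub_of_add_eq (sum_compl_add_sum t w)
    _ ≤ ∑ i, w i - ∑ i ∈ s, w i := sub_le_sub_left hsum _
    _ = ∑ i ∈ sᶜ, w i := (eq_sub_of_add_eq (sum_compl_add_sum s w)).symm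
    _ ≤ ξ * ∑ i ∈ s, w i := hcone
    _ ≤ ξ * ∑ i ∈ t, w i := mul_le_mul_of_nonneg_left hsum hξ

theorem Finset.sum_le_mul_sum_of_slope_separated {ι 𝕜 : Type*} [Field 𝕜] [LinearOrder 𝕜]
    [IsStrictOrderedRing 𝕜] {s t : Finset ι} {a b : ι → 𝕜} {c ξ : 𝕜} (hc : 0 < c) (hξ : 0 ≤ ξ)
    (hb : ∑ i ∈ s, b i ≤ ξ * ∑ i ∈ t, b i)
    (hs : ∀ i ∈ s, c * a i ≤ b i) (ht : ∀ i ∈ t, b i ≤ c * a i) :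
    ∑ i ∈ s, a i ≤ ξ * ∑ i ∈ t, a i := by
  refine le_of_mul_le_mul_left ?_ hc
  calc c * ∑ i ∈ s, a i = ∑ i ∈ s, c * a i := mul_sum _ _ _
    _ ≤ ∑ i ∈ s, b i := sum_le_sum hs
    _ ≤ ξ * ∑ i ∈ t, b i := hb
    _ ≤ ξ * ∑ i ∈ t, c * a i := by gcongr with i hi; exact ht i hi
    _ = c * (ξ * ∑ i ∈ t, a i) := by rw [← mul_sum, mul_left_comm]

theorem stmt11_general (ρ : ℝ → ℝ)
    (hconc : ∀ x y t : ℝ, 0 ≤ x → 0 ≤ y → 0 ≤ t → t ≤ 1 →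
      t * ρ x + (1 - t) * ρ y ≤ ρ (t * x + (1 - t) * y))
    (hmono : ∀ x y : ℝ, 0 ≤ x → x ≤ y → ρ x ≤ ρ y)
    (h0 : ρ 0 = 0)
    (hpos : ∀ x : ℝ, 0 < x → 0 < ρ x)
    (m : ℕ) (ξ : ℝ) (hξ : 0 < ξ)
    (A M : Finset (Fin m)) (u : Fin m → ℝ)
    (hu : ∀ i, u i ≠ 0)
    (hcone : ∑ i ∈ Aᶜ, ρ |u i| ≤ ξ * ∑ i ∈ A, ρ |u i|)
    (hMcard : M.card = A.card)
    (hM : ∀ i ∈ M, ∀ j ∉ M, |u j| ≤ |u i|) :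
    ∑ i ∈ Mᶜ, |u i| ≤ ξ * ∑ i ∈ M, |u i| := by
  have hu' : ∀ i, 0 < |u i| := fun i => abs_pos.2 (hu i)
  rcases M.eq_empty_or_nonempty with rfl | hMne
  · obtain rfl : A = ∅ := card_eq_zero.1 hMcard.symm
    have huniv : (univ : Finset (Fin m)) = ∅ := by
      by_contra hne
      simp only [compl_empty, sum_empty, mul_zero] at hcone
      exact (sum_pos (fun i _ => hpos _ (hu' i)) (nonempty_iff_ne_empty.2 hne)).not_ge hcone
    simp [huniv]
  obtain ⟨i₀, hi₀, hmin⟩ := M.exists_min_image (|u ·|) hMne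
  have hρ : ConcaveOn ℝ (Set.Ici 0) ρ := ⟨convex_Ici 0, fun x hx y hy a b ha hb hab => by
    obtain rfl := eq_sub_of_add_eq' hab
    exact hconc x y a hx hy ha (by linarith)⟩
  have hslope := hρ.antitoneOn_div_of_map_zero h0
  have hMcone : ∑ i ∈ Mᶜ, ρ |u i| ≤ ξ * ∑ i ∈ M, ρ |u i| :=
    sum_compl_le_mul_sum_of_card_eq_of_threshold (ρ |u i₀|) hξ.le hMcard.symm
      (fun j hj => hmono _ _ (abs_nonneg _) (hM i₀ hi₀ j hj))
      (fun i hi => hmono _ _ (abs_nonneg _) (hmin i hi)) hcone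
  refine sum_le_mul_sum_of_slope_separated (c := ρ |u i₀| / |u i₀|)
    (div_pos (hpos _ (hu' i₀)) (hu' i₀)) hξ.le hMcone (fun j hj => ?_) (fun i hi => ?_)
  · rw [← le_div_iff₀ (hu' j)]
    exact hslope (hu' j) (hu' i₀) (hM i₀ hi₀ j (mem_compl.1 hj))
  · rw [← div_le_iff₀ (hu' i)]
    exact hslope (hu' i₀) (hu' i) (hmin i hi)

/-- If `u` (with all coordinates nonzero) lies in the generalized restricted cone
`ρ(u_{Aᶜ}) ≤ ξ ρ(u_A)` for a concave nondecreasing `ρ` with `ρ 0 = 0` positive on `(0,∞)`,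
and `M` is an index set of the `|A|` largest coordinates of `u` in absolute value, then
`‖u_{Mᶜ}‖₁ ≤ ξ ‖u_M‖₁`. -/
theorem stmt11 (ρ : ℝ → ℝ)
    (hnonneg : ∀ x, 0 ≤ x → 0 ≤ ρ x)
    (hconc : ∀ x y t : ℝ, 0 ≤ x → 0 ≤ y → 0 ≤ t → t ≤ 1 →
      t * ρ x + (1 - t) * ρ y ≤ ρ (t * x + (1 - t) * y))
    (hmono : ∀ x y : ℝ, 0 ≤ x → x ≤ y → ρ x ≤ ρ y)
    (h0 : ρ 0 = 0)
    (hpos : ∀ x : ℝ, 0 < x → 0 < ρ x)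
    (m : ℕ) (ξ : ℝ) (hξ : 0 < ξ)
    (A M : Finset (Fin m)) (u : Fin m → ℝ)
    (hu : ∀ i, u i ≠ 0)
    (hcone : ∑ i ∈ Aᶜ, ρ |u i| ≤ ξ * ∑ i ∈ A, ρ |u i|)
    (hMcard : M.card = A.card)
    (hM : ∀ i ∈ M, ∀ j ∉ M, |u j| ≤ |u i|) :
    ∑ i ∈ Mᶜ, |u i| ≤ ξ * ∑ i ∈ M, |u i| :=
  stmt11_general ρ hconc hmono h0 hpos m ξ hξ A M u hu hcone hMcard hM
end

section
/- Fix Z ∈ ℝ^{n×m}, w ∈ ℝⁿ, δ ∈ (0,1), a coordinate-separable penalty ρ satisfying ρ(0)=0, subadditivity on vectors (ρ(u+v) ≤ ρ(u)+ρ(v)), and ρ(u) ≤ ρ'(0+)‖u‖₁ for all u, where ρ'(0+) > 0. Let θ* ∈ ℝ^m, S* = supp(θ*), ξ = (1+δ)/(1−δ). Assume (w,Z) satisfies the Gaussian width condition (1/n)|⟨w,Zu⟩| ≤ δ[(1/2n)‖Zu‖₂² + ρ(u)] for all u, and the restricted eigenvalue bound (1/n)‖Zu‖₂² ≥ α²‖u‖₂²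 for all u in the cone {u : ρ(u_{S*ᶜ}) ≤ ξ ρ(u_{S*})}, with α > 0. Then any global minimizer θ̂ of θ ↦ (1/2n)‖Zθ* + w − Zθ‖₂² + ρ(θ) satisfies ‖θ̂ − θ*‖₂ ≤ (2ξ/α²) ρ'(0+) ‖θ*‖₀^{1/2}. -/
open Matrix Finset

set_option maxHeartbeats 1600000

/-- Fixed-design ℓ₂ deviation bound: under the Gaussian width condition with constant
`δ ∈ (0,1)` and the generalized restricted eigenvalue bound `α² > 0` over the cone with
parameter `ξ = (1+δ)/(1−δ)`, any global minimizer `θ̂` of the penalized least-squares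
objective satisfies `‖θ̂ − θ*‖₂ ≤ (2ξ/α²) ρ'(0+) ‖θ*‖₀^{1/2}`. -/
theorem stmt12 (n m : ℕ) (hn : 0 < n)
    (Z : Matrix (Fin n) (Fin m) ℝ) (w : Fin n → ℝ)
    (δ : ℝ) (hδ0 : 0 < δ) (hδ1 : δ < 1)
    (ρ : ℝ → ℝ) (hρ0 : ρ 0 = 0) (hρnn : ∀ x, 0 ≤ ρ x)
    (hρsub : ∀ x y : ℝ, 0 ≤ x → 0 ≤ y → ρ (x + y) ≤ ρ x + ρ y)
    (hρmono : ∀ x y : ℝ, 0 ≤ x → x ≤ y → ρ x ≤ ρ y)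
    (ν : ℝ) (hν : 0 < ν) (hρlin : ∀ x : ℝ, 0 ≤ x → ρ x ≤ ν * x)
    (θstar : Fin m → ℝ) (α ξ : ℝ)
    (hξ : ξ = (1 + δ) / (1 - δ)) (hα : 0 < α)
    (hGW : ∀ u : Fin m → ℝ,
      (1 / n) * |∑ k, w k * Z.mulVec u k| ≤
        δ * ((1 / (2 * n)) * (∑ k, (Z.mulVec u k) ^ 2) + ∑ i, ρ |u i|))
    (hRE : ∀ u : Fin m → ℝ,
      (∑ i ∈ (Finset.univ.filter fun i => θstar i ≠ 0)ᶜ, ρ |u i|) ≤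
          ξ * ∑ i ∈ Finset.univ.filter (fun i => θstar i ≠ 0), ρ |u i| →
        α ^ 2 * ∑ i, (u i) ^ 2 ≤ (1 / n) * ∑ k, (Z.mulVec u k) ^ 2)
    (θhat : Fin m → ℝ)
    (hmin : ∀ θ : Fin m → ℝ,
      (1 / (2 * n)) * (∑ k, ((Z.mulVec θstar + w) k - Z.mulVec θhat k) ^ 2) +
          (∑ i, ρ |θhat i|) ≤
        (1 / (2 * n)) * (∑ k, ((Z.mulVec θstar + w) k - Z.mulVec θ k) ^ 2) +
          (∑ i, ρ |θ i|)) :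
    Real.sqrt (∑ i, (θhat i - θstar i) ^ 2) ≤
      (2 * ξ / α ^ 2) * ν *
        Real.sqrt ((Finset.univ.filter fun i => θstar i ≠ 0).card) := by

  classical
  set S : Finset (Fin m) := Finset.univ.filter (fun i => θstar i ≠ 0) with hSdef
  set u : Fin m → ℝ := fun i => θhat i - θstar i with hudef
  have hn' : (0:ℝ) < (n:ℝ) := by exact_mod_cast hn
  have hn0 : (n:ℝ) ≠ 0 := ne_of_gt hn'
  set v : Fin n → ℝ := Z.mulVec u with hvdef
  have hvk : ∀ k, v k = Z.mulVec θhat k - Z.mulVec θstar k := by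
    intro k
    simp only [hvdef, hudef, Matrix.mulVec, dotProduct, mul_sub, Finset.sum_sub_distrib]
  set A : ℝ := ∑ i ∈ S, ρ |u i| with hA
  set B : ℝ := ∑ i ∈ Sᶜ, ρ |u i| with hB
  set T : ℝ := (1/(2*(n:ℝ))) * ∑ k, (v k)^2 with hT
  have hApos : 0 ≤ A := Finset.sum_nonneg fun i _ => hρnn _
  have hBpos : 0 ≤ B := Finset.sum_nonneg fun i _ => hρnn _
  have hTpos : 0 ≤ T :=
    mul_nonneg (by positivity) (Finset.sum_nonneg fun k _ => sq_nonneg _)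
  have hAB : (∑ i, ρ |u i|) = A + B := (Finset.sum_add_sum_compl S _).symm
  -- basic inequality
  have hbasic : T ≤ (1/(n:ℝ)) * (∑ k, w k * v k) + (∑ i, ρ |θstar i|)
      - (∑ i, ρ |θhat i|) := by
    have h1 := hmin θstar
    have e1 : ∀ k, ((Z.mulVec θstar + w) k - Z.mulVec θstar k) = w k := by
      intro k; simp
    have e2 : ∀ k, ((Z.mulVec θstar + w) k - Z.mulVec θhat k) = w k - v k := by
      intro k; rw [hvk k]; simp [Pi.add_apply]; ring
    simp only [e1, e2] at h1
    have e3 : (∑ k, (w k - v k)^2)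
        = (∑ k, (w k)^2) - 2*(∑ k, w k * v k) + (∑ k, (v k)^2) := by
      have hpt : ∀ k : Fin n, (w k - v k)^2 = (w k)^2 - (2*(w k * v k) - (v k)^2) := by
        intro k; ring
      simp_rw [hpt]
      rw [Finset.sum_sub_distrib, Finset.sum_sub_distrib, ← Finset.mul_sum]
      ring
    rw [e3] at h1
    have hlin : (1/(2*(n:ℝ))) * ((∑ k, (w k)^2) - 2*(∑ k, w k * v k) + (∑ k, (v k)^2))
        = (1/(2*(n:ℝ)))*(∑ k, (w k)^2) - (1/(n:ℝ))*(∑ k, w k * v k) + T := by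
      rw [hT]; field_simp
    rw [hlin] at h1
    linarith
  -- Gaussian width bound
  have hgw : (1/(n:ℝ)) * (∑ k, w k * v k) ≤ δ * (T + (A + B)) := by
    have h2 := hGW u
    rw [← hvdef, ← hT, hAB] at h2
    have h3 : (1/(n:ℝ)) * (∑ k, w k * v k) ≤ (1/(n:ℝ)) * |∑ k, w k * v k| :=
      mul_le_mul_of_nonneg_left (le_abs_self _) (by positivity)
    calc (1/(n:ℝ)) * (∑ k, w k * v k) ≤ (1/(n:ℝ)) * |∑ k, w k * v k| := h3
      _ ≤ δ * ((1/(2*(n:ℝ))) * (∑ k, (v k)^2) + (A + B)) := h2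
      _ = δ * (T + (A + B)) := by rw [hT]
  -- penalty decomposition
  have hP : (∑ i, ρ |θstar i|) - (∑ i, ρ |θhat i|) ≤ A - B := by
    have hcompl0 : ∀ i ∈ Sᶜ, θstar i = 0 := by
      intro i hi
      have := Finset.mem_compl.mp hi
      by_contra hne
      exact this (by simp [hSdef, hne])
    have hsplit1 : (∑ i, ρ |θstar i|) = ∑ i ∈ S, ρ |θstar i| := by
      rw [← Finset.sum_add_sum_compl S fun i => ρ |θstar i|]
      have : ∑ i ∈ Sᶜ, ρ |θstar i| = 0 := Finset.sum_eq_zero fun i hi => by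
        rw [hcompl0 i hi]; simpa using hρ0
      rw [this, add_zero]
    have hsplit2 : (∑ i, ρ |θhat i|) = (∑ i ∈ S, ρ |θhat i|) + B := by
      rw [← Finset.sum_add_sum_compl S fun i => ρ |θhat i|]
      congr 1
      apply Finset.sum_congr rfl
      intro i hi
      have : u i = θhat i := by simp [hudef, hcompl0 i hi]
      rw [this]
    have hterm : ∀ i ∈ S, ρ |θstar i| ≤ ρ |θhat i| + ρ |u i| := by
      intro i _
      have htri : |θstar i| ≤ |θhat i| + |u i| := by
        have : θstar i = θhat i - u i := by simp [hudef]
        rw [this]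
        have := abs_add_le (θhat i) (-(u i))
        simpa [sub_eq_add_neg] using this
      calc ρ |θstar i| ≤ ρ (|θhat i| + |u i|) :=
            hρmono _ _ (abs_nonneg _) htri
        _ ≤ ρ |θhat i| + ρ |u i| := hρsub _ _ (abs_nonneg _) (abs_nonneg _)
    have hsum : ∑ i ∈ S, ρ |θstar i| ≤ (∑ i ∈ S, ρ |θhat i|) + A := by
      rw [hA, ← Finset.sum_add_distrib]
      exact Finset.sum_le_sum hterm
    rw [hsplit1, hsplit2]
    linarith
  -- key inequality
  have hkey : (1-δ)*T ≤ (1+δ)*A - (1-δ)*B := by nlinarith [hbasic, hgw, hP]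
  have hδ1' : (0:ℝ) < 1 - δ := by linarith
  have hξpos : 0 < ξ := by rw [hξ]; positivity
  have hξmul : (1-δ)*ξ = 1+δ := by rw [hξ]; field_simp
  have hcone : B ≤ ξ * A := by
    have h1 : (1-δ)*B ≤ (1-δ)*(ξ*A) := by nlinarith [hTpos]
    exact le_of_mul_le_mul_left h1 hδ1'
  have hTξ : T ≤ ξ * A := by
    have h1 : (1-δ)*T ≤ (1-δ)*(ξ*A) := by nlinarith [hBpos]
    exact le_of_mul_le_mul_left h1 hδ1'
  -- restricted eigenvalue
  set N : ℝ := ∑ i, (u i)^2 with hN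
  have hNnn : 0 ≤ N := Finset.sum_nonneg fun i _ => sq_nonneg _
  have hre : α^2 * N ≤ 2 * T := by
    have h4 := hRE u hcone
    rw [← hvdef, ← hN] at h4
    have : (1/(n:ℝ)) * (∑ k, (v k)^2) = 2 * T := by rw [hT]; field_simp
    linarith [h4, this.le, this.ge]
  -- Cauchy-Schwarz
  set c : ℝ := Real.sqrt (S.card) with hc
  set r : ℝ := Real.sqrt N with hr
  have hr2 : r^2 = N := Real.sq_sqrt hNnn
  have hAb : A ≤ ν * ∑ i ∈ S, |u i| := by
    rw [hA, Finset.mul_sum]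
    exact Finset.sum_le_sum fun i _ => hρlin _ (abs_nonneg _)
  have hcs : ∑ i ∈ S, |u i| ≤ c * r := by
    have h5 : (∑ i ∈ S, |u i|)^2 ≤ (S.card : ℝ) * N := by
      have h6 := sq_sum_le_card_mul_sum_sq (s := S) (f := fun i => |u i|)
      have h7 : ∑ i ∈ S, |u i|^2 ≤ N := by
        rw [hN]
        have : ∀ i ∈ S, |u i|^2 = (u i)^2 := fun i _ => sq_abs _
        rw [Finset.sum_congr rfl this]
        exact Finset.sum_le_sum_of_subset_of_nonneg (Finset.subset_univ S)
          (fun i _ _ => sq_nonneg _)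
      calc (∑ i ∈ S, |u i|)^2 ≤ (S.card : ℝ) * ∑ i ∈ S, |u i|^2 := by
            exact_mod_cast h6
        _ ≤ (S.card : ℝ) * N :=
            mul_le_mul_of_nonneg_left h7 (Nat.cast_nonneg _)
    have hnn : 0 ≤ ∑ i ∈ S, |u i| := Finset.sum_nonneg fun i _ => abs_nonneg _
    have : ∑ i ∈ S, |u i| ≤ Real.sqrt ((S.card : ℝ) * N) := by
      have h8 := Real.sqrt_le_sqrt h5
      rwa [Real.sqrt_sq hnn] at h8
    calc ∑ i ∈ S, |u i| ≤ Real.sqrt ((S.card : ℝ) * N) := this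
      _ = c * r := by rw [hc, hr, Real.sqrt_mul (Nat.cast_nonneg _)]
  -- conclude
  have hcnn : 0 ≤ c := Real.sqrt_nonneg _
  have hrnn : 0 ≤ r := Real.sqrt_nonneg _
  rcases eq_or_lt_of_le hrnn with hr0 | hrpos
  · rw [← hr0]; positivity
  · have hchain : α^2 * N ≤ 2*ξ*ν*(c*r) := by
      calc α^2 * N ≤ 2 * T := hre
        _ ≤ 2 * (ξ * A) := by linarith
        _ = 2*ξ*A := by ring
        _ ≤ 2*ξ*(ν*(c*r)) := by
            have hA2 : A ≤ ν*(c*r) :=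
              le_trans hAb (mul_le_mul_of_nonneg_left hcs hν.le)
            exact mul_le_mul_of_nonneg_left hA2 (by positivity)
        _ = 2*ξ*ν*(c*r) := by ring
    have hfin : (α^2*r)*r ≤ (2*ξ*ν*c)*r := by
      have : (α^2*r)*r = α^2*N := by rw [← hr2]; ring
      rw [this]
      calc α^2*N ≤ 2*ξ*ν*(c*r) := hchain
        _ = (2*ξ*ν*c)*r := by ring
    have hmain : α^2*r ≤ 2*ξ*ν*c := le_of_mul_le_mul_right hfin hrpos
    have : r ≤ (2*ξ*ν*c)/α^2 := by
      rw [le_div_iff₀ (by positivity)]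
      nlinarith [hmain]
    calc r ≤ (2*ξ*ν*c)/α^2 := this
      _ = 2*ξ/α^2*ν*c := by ring
end

section
/- In the setting of the fixed-design penalized least squares bound (GW condition with constant δ ∈ (0,1), restricted eigenvalue α² > 0 over the cone with parameter ξ = (1+δ)/(1−δ), subadditive penalty ρ with ρ(u) ≤ ρ'(0+)‖u‖₁), any global minimizer θ̂ satisfies the ℓ₁ bound ‖θ̂ − θ*‖₁ ≤ (2ξ(1+ξ)/α²) ρ'(0+) ‖θ*‖₀. -/
/-!
Write `u = θ̂ - θ*`, `S` for the support of `θ*`, `R_S = ∑_{i ∈ S} ρ |u i|` and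
`R_Sᶜ = ∑_{i ∉ S} ρ |u i|`. Comparing the objective at `θ̂` and at `θ*`, the Gaussian-width
condition absorbs the noise term `⟨w, Z u⟩ / n`, and what is left is
`‖Z u‖₂² / (2n) + R_Sᶜ ≤ ξ R_S`. So `u` lies in the cone, and the restricted eigenvalue bound gives
`α² ‖u‖₂² ≤ 2 (ξ R_S - R_Sᶜ)`.

Subadditivity and monotonicity make `ρ t / t` nonincreasing up to a factor:
`t ρ a ≤ (a + t) ρ t`. With `ρ t ≤ ν t` and Cauchy–Schwarz on `S`, this gives
`‖u‖₁ (ξ R_S - R_Sᶜ) ≤ ξ (1 + ξ) ν |S| ‖u‖₂²`. Dividing one inequality by the other gives the bound.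
-/

open Matrix Finset

structure SubadditivePenalty (ρ : ℝ → ℝ) : Prop where
  map_zero : ρ 0 = 0
  mono : ∀ x y : ℝ, 0 ≤ x → x ≤ y → ρ x ≤ ρ y
  add_le : ∀ x y : ℝ, 0 ≤ x → 0 ≤ y → ρ (x + y) ≤ ρ x + ρ y

variable {ι : Type*} {ρ : ℝ → ℝ}

namespace SubadditivePenalty

theorem nonneg (hρ : SubadditivePenalty ρ) {x : ℝ} (hx : 0 ≤ x) : 0 ≤ ρ x :=
  hρ.map_zero ▸ hρ.mono 0 x le_rfl hx

theorem natCast_mul_le (hρ : SubadditivePenalty ρ) (k : ℕ) {x : ℝ} (hx : 0 ≤ x) :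
    ρ (k * x) ≤ k * ρ x := by
  induction k with
  | zero => simp [hρ.map_zero]
  | succ k ih =>
    calc ρ ((k + 1 : ℕ) * x) = ρ (k * x + x) := by push_cast; ring_nf
      _ ≤ ρ (k * x) + ρ x := hρ.add_le _ _ (by positivity) hx
      _ ≤ k * ρ x + ρ x := by gcongr
      _ = (k + 1 : ℕ) * ρ x := by push_cast; ring

/-- Cover `[0, a]` by `⌈a / x⌉₊` copies of `[0, x]`. -/
theorem mul_le_add_mul (hρ : SubadditivePenalty ρ) {a x : ℝ} (ha : 0 ≤ a) (hx : 0 ≤ x) :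
    x * ρ a ≤ (a + x) * ρ x := by
  rcases hx.eq_or_lt with rfl | hx
  · simp [hρ.map_zero]
  have hceil : (⌈a / x⌉₊ : ℝ) ≤ a / x + 1 := (Nat.ceil_lt_add_one (by positivity)).le
  have hcover : a ≤ ⌈a / x⌉₊ * x := (div_le_iff₀ hx).mp (Nat.le_ceil _)
  have : ρ a ≤ (a / x + 1) * ρ x :=
    calc ρ a ≤ ρ (⌈a / x⌉₊ * x) := hρ.mono _ _ ha hcover
      _ ≤ ⌈a / x⌉₊ * ρ x := hρ.natCast_mul_le _ hx.le
      _ ≤ (a / x + 1) * ρ x := by gcongr; exact hρ.nonneg hx.le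
  calc x * ρ a ≤ x * ((a / x + 1) * ρ x) := by gcongr
    _ = (a + x) * ρ x := by field_simp

theorem le_add_abs_sub (hρ : SubadditivePenalty ρ) (a b : ℝ) : ρ |a| ≤ ρ |b| + ρ |b - a| :=
  calc ρ |a| ≤ ρ (|b| + |b - a|) :=
        hρ.mono _ _ (abs_nonneg a) (by linarith [abs_sub_abs_le_abs_sub a b, abs_sub_comm a b])
    _ ≤ ρ |b| + ρ |b - a| := hρ.add_le _ _ (abs_nonneg _) (abs_nonneg _)

theorem sum_abs_mul_sum_le (hρ : SubadditivePenalty ρ) (S T : Finset ι) (u : ι → ℝ) :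
    (∑ i ∈ T, |u i|) * ∑ j ∈ S, ρ |u j| ≤
      (∑ j ∈ S, |u j|) * (∑ i ∈ T, ρ |u i|) + #S * ∑ i ∈ T, |u i| * ρ |u i| := by
  have hpair : ∀ j ∈ S, ∀ i ∈ T, |u i| * ρ |u j| ≤ |u j| * ρ |u i| + |u i| * ρ |u i| :=
    fun j _ i _ => by
      have := hρ.mul_le_add_mul (abs_nonneg (u j)) (abs_nonneg (u i)); linarith
  calc (∑ i ∈ T, |u i|) * ∑ j ∈ S, ρ |u j| = ∑ j ∈ S, ∑ i ∈ T, |u i| * ρ |u j| := by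
        rw [mul_sum]; simp only [sum_mul]
    _ ≤ ∑ j ∈ S, ∑ i ∈ T, (|u j| * ρ |u i| + |u i| * ρ |u i|) :=
        sum_le_sum fun j hj => sum_le_sum (hpair j hj)
    _ = _ := by simp only [sum_add_distrib, ← mul_sum, sum_const, nsmul_eq_mul, sum_mul]

theorem sum_abs_mul_cone_gap_le [Fintype ι] [DecidableEq ι]
    (hρ : SubadditivePenalty ρ) (S : Finset ι) (u : ι → ℝ)
    {ν ξ : ℝ} (hν : 0 ≤ ν) (hρlin : ∀ x : ℝ, 0 ≤ x → ρ x ≤ ν * x) (hξ : 0 ≤ ξ) :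
    (∑ i, |u i|) * (ξ * ∑ i ∈ S, ρ |u i| - ∑ i ∈ Sᶜ, ρ |u i|) ≤
      ξ * (1 + ξ) * ν * #S * ∑ i, u i ^ 2 := by
  set A := ∑ i ∈ S, |u i|
  set X := ∑ i ∈ Sᶜ, |u i|
  set Rs := ∑ i ∈ S, ρ |u i|
  set Rc := ∑ i ∈ Sᶜ, ρ |u i|
  set Qs := ∑ i ∈ S, u i ^ 2
  set Qc := ∑ i ∈ Sᶜ, u i ^ 2
  set P := ∑ i ∈ Sᶜ, |u i| * ρ |u i|
  have hlin : ∀ T : Finset ι, ∑ i ∈ T, ρ |u i| ≤ ν * ∑ i ∈ T, |u i| := fun T => by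
    rw [mul_sum]; exact sum_le_sum fun i _ => hρlin _ (abs_nonneg _)
  have hs : (0 : ℝ) ≤ #S := Nat.cast_nonneg _
  have hA : 0 ≤ A := sum_nonneg fun i _ => abs_nonneg _
  have hX : 0 ≤ X := sum_nonneg fun i _ => abs_nonneg _
  have hRc : 0 ≤ Rc := sum_nonneg fun i _ => hρ.nonneg (abs_nonneg _)
  have hQs : 0 ≤ Qs := sum_nonneg fun i _ => sq_nonneg _
  have hQc : 0 ≤ Qc := sum_nonneg fun i _ => sq_nonneg _
  have hCS : A ^ 2 ≤ #S * Qs := by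
    simpa only [sq_abs] using sq_sum_le_card_mul_sum_sq (s := S) (f := fun i => |u i|)
  have hP : P ≤ ν * Qc := by
    rw [mul_sum]
    refine sum_le_sum fun i _ => ?_
    calc |u i| * ρ |u i| ≤ |u i| * (ν * |u i|) := by gcongr; exact hρlin _ (abs_nonneg _)
      _ = ν * u i ^ 2 := by rw [← sq_abs (u i)]; ring
  have hcross : X * Rs ≤ A * Rc + #S * P := hρ.sum_abs_mul_sum_le S Sᶜ u
  have hamgm : (ξ * A - X) * Rc ≤ ν * (ξ * A) ^ 2 / 4 := by
    rcases le_or_gt X (ξ * A) with h | h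
    · calc (ξ * A - X) * Rc ≤ (ξ * A - X) * (ν * X) :=
            mul_le_mul_of_nonneg_left (hlin Sᶜ) (by linarith)
        _ ≤ ν * (ξ * A) ^ 2 / 4 := by nlinarith [mul_nonneg hν (sq_nonneg (ξ * A - 2 * X))]
    · nlinarith [mul_nonneg hν (sq_nonneg (ξ * A))]
  have hon : A * (ξ * Rs - Rc) ≤ ξ * ν * (#S * Qs) := by
    nlinarith [mul_le_mul_of_nonneg_left (hlin S) hA, mul_nonneg hA hRc, mul_nonneg hξ hν]
  have hoff : X * (ξ * Rs - Rc) ≤ ξ ^ 2 * ν * (#S * Qs) / 4 + ξ * ν * (#S * Qc) := by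
    have := mul_le_mul_of_nonneg_left hCS (mul_nonneg (sq_nonneg ξ) hν)
    nlinarith [mul_le_mul_of_nonneg_left hcross hξ,
      mul_le_mul_of_nonneg_left hP (mul_nonneg hξ hs)]
  rw [← sum_add_sum_compl S, ← sum_add_sum_compl S fun i => u i ^ 2]
  change (A + X) * (ξ * Rs - Rc) ≤ ξ * (1 + ξ) * ν * #S * (Qs + Qc)
  nlinarith [mul_nonneg (mul_nonneg (sq_nonneg ξ) hν) (mul_nonneg hs hQs),
    mul_nonneg (mul_nonneg (sq_nonneg ξ) hν) (mul_nonneg hs hQc)]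

theorem sum_sub_sum_le [Fintype ι] [DecidableEq ι] (hρ : SubadditivePenalty ρ)
    {S : Finset ι} {θstar : ι → ℝ} (hS : ∀ i ∉ S, θstar i = 0) (θ : ι → ℝ) :
    ∑ i, ρ |θstar i| - ∑ i, ρ |θ i| ≤
      ∑ i ∈ S, ρ |θ i - θstar i| - ∑ i ∈ Sᶜ, ρ |θ i - θstar i| := by
  have hon : ∑ i ∈ S, ρ |θstar i| ≤ ∑ i ∈ S, ρ |θ i| + ∑ i ∈ S, ρ |θ i - θstar i| := by
    rw [← sum_add_distrib]; exact sum_le_sum fun i _ => hρ.le_add_abs_sub _ _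
  have hzero : ∑ i ∈ Sᶜ, ρ |θstar i| = 0 := sum_eq_zero fun i hi => by
    rw [hS i (mem_compl.mp hi), abs_zero, hρ.map_zero]
  have hoff : ∑ i ∈ Sᶜ, ρ |θ i - θstar i| = ∑ i ∈ Sᶜ, ρ |θ i| := sum_congr rfl fun i hi => by
    rw [hS i (mem_compl.mp hi), sub_zero]
  rw [← sum_add_sum_compl S, ← sum_add_sum_compl S fun i => ρ |θ i|, hzero, hoff]
  linarith

end SubadditivePenalty

theorem sum_sq_add_sub_mulVec [Fintype ι] {κ : Type*} [Fintype κ] (Z : Matrix κ ι ℝ)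
    (w : κ → ℝ) (θ θ' : ι → ℝ) :
    ∑ k, ((Z *ᵥ θ' + w) k - (Z *ᵥ θ) k) ^ 2 =
      ∑ k, w k ^ 2 - 2 * ∑ k, w k * (Z *ᵥ (θ - θ')) k + ∑ k, (Z *ᵥ (θ - θ')) k ^ 2 := by
  simp only [mul_sum, ← sum_sub_distrib, ← sum_add_distrib, mulVec_sub, Pi.add_apply,
    Pi.sub_apply]
  exact sum_congr rfl fun k _ => by ring

theorem SubadditivePenalty.cone_of_objective_le [Fintype ι] [DecidableEq ι]
    (hρ : SubadditivePenalty ρ) {n : ℕ} (Z : Matrix (Fin n) ι ℝ) (w : Fin n → ℝ) {δ ξ : ℝ}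
    (hδ1 : δ < 1)
    (hξ : ξ = (1 + δ) / (1 - δ)) {S : Finset ι} {θstar : ι → ℝ} (hS : ∀ i ∉ S, θstar i = 0)
    (θhat : ι → ℝ)
    (hGW : (1 / n) * |∑ k, w k * (Z *ᵥ (θhat - θstar)) k| ≤
      δ * ((1 / (2 * n)) * ∑ k, (Z *ᵥ (θhat - θstar)) k ^ 2 + ∑ i, ρ |(θhat - θstar) i|))
    (hle : (1 / (2 * n)) * ∑ k, ((Z *ᵥ θstar + w) k - (Z *ᵥ θhat) k) ^ 2 + ∑ i, ρ |θhat i| ≤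
      (1 / (2 * n)) * ∑ k, ((Z *ᵥ θstar + w) k - (Z *ᵥ θstar) k) ^ 2 + ∑ i, ρ |θstar i|) :
    (1 / (2 * n)) * ∑ k, (Z *ᵥ (θhat - θstar)) k ^ 2 + ∑ i ∈ Sᶜ, ρ |θhat i - θstar i| ≤
      ξ * ∑ i ∈ S, ρ |θhat i - θstar i| := by
  rw [sum_sq_add_sub_mulVec, sum_sq_add_sub_mulVec, sub_self, mulVec_zero] at hle
  simp only [Pi.zero_apply, mul_zero, sum_const_zero, zero_pow two_ne_zero, sub_zero,
    add_zero] at hle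
  rw [← sum_add_sum_compl S] at hGW
  simp only [Pi.sub_apply] at hGW
  set q := (1 / (2 * n)) * ∑ k, (Z *ᵥ (θhat - θstar)) k ^ 2
  set W := ∑ k, w k * (Z *ᵥ (θhat - θstar)) k
  set Rs := ∑ i ∈ S, ρ |θhat i - θstar i|
  set Rc := ∑ i ∈ Sᶜ, ρ |θhat i - θstar i|
  have hbasic : q + ∑ i, ρ |θhat i| ≤ 1 / n * W + ∑ i, ρ |θstar i| := by
    have : 1 / (2 * (n : ℝ)) * (∑ k, w k ^ 2 - 2 * W + ∑ k, (Z *ᵥ (θhat - θstar)) k ^ 2) =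
        1 / (2 * (n : ℝ)) * ∑ k, w k ^ 2 - 1 / n * W + q := by ring
    linarith
  have hpen := hρ.sum_sub_sum_le hS θhat
  have hnoise : 1 / n * W ≤ 1 / n * |W| := by gcongr; exact le_abs_self W
  have hξδ : ξ * (1 - δ) = 1 + δ := by rw [hξ, div_mul_cancel₀ _ (by linarith)]
  have : (1 - δ) * (q + Rc) ≤ (1 - δ) * (ξ * Rs) := by
    rw [← mul_assoc, mul_comm (1 - δ) ξ, hξδ]
    linarith
  exact le_of_mul_le_mul_left this (by linarith)

theorem sum_abs_le_of_cone_gap [Fintype ι] (u : ι → ℝ) {a C D : ℝ} (ha : 0 < a)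
    (hC : 0 ≤ C) (hquad : a * ∑ i, u i ^ 2 ≤ 2 * D)
    (hgap : (∑ i, |u i|) * D ≤ C * ∑ i, u i ^ 2) :
    ∑ i, |u i| ≤ 2 * C / a := by
  rcases (sum_nonneg fun i _ => sq_nonneg (u i)).eq_or_lt with hzero | hpos
  · have hu : ∀ i, u i = 0 := fun i => by
      simpa using (sum_eq_zero_iff_of_nonneg fun i _ => sq_nonneg (u i)).mp hzero.symm i
        (mem_univ i)
    simp only [hu, abs_zero, sum_const_zero]
    positivity
  have hL1 : 0 ≤ ∑ i, |u i| := sum_nonneg fun i _ => abs_nonneg _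
  rw [le_div_iff₀ ha]
  refine le_of_mul_le_mul_right ?_ hpos
  nlinarith [mul_le_mul_of_nonneg_left hquad hL1]

theorem stmt13_general (n m : ℕ)
    (Z : Matrix (Fin n) (Fin m) ℝ) (w : Fin n → ℝ)
    (δ : ℝ) (hδ0 : 0 < δ) (hδ1 : δ < 1)
    (ρ : ℝ → ℝ) (hρ0 : ρ 0 = 0)
    (hρsub : ∀ x y : ℝ, 0 ≤ x → 0 ≤ y → ρ (x + y) ≤ ρ x + ρ y)
    (hρmono : ∀ x y : ℝ, 0 ≤ x → x ≤ y → ρ x ≤ ρ y)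
    (ν : ℝ) (hν : 0 < ν) (hρlin : ∀ x : ℝ, 0 ≤ x → ρ x ≤ ν * x)
    (θstar : Fin m → ℝ) (α ξ : ℝ)
    (hξ : ξ = (1 + δ) / (1 - δ)) (hα : 0 < α)
    (hGW : ∀ u : Fin m → ℝ,
      (1 / n) * |∑ k, w k * Z.mulVec u k| ≤
        δ * ((1 / (2 * n)) * (∑ k, (Z.mulVec u k) ^ 2) + ∑ i, ρ |u i|))
    (hRE : ∀ u : Fin m → ℝ,
      (∑ i ∈ (Finset.univ.filter fun i => θstar i ≠ 0)ᶜ, ρ |u i|) ≤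
          ξ * ∑ i ∈ Finset.univ.filter (fun i => θstar i ≠ 0), ρ |u i| →
        α ^ 2 * ∑ i, (u i) ^ 2 ≤ (1 / n) * ∑ k, (Z.mulVec u k) ^ 2)
    (θhat : Fin m → ℝ)
    (hmin : ∀ θ : Fin m → ℝ,
      (1 / (2 * n)) * (∑ k, ((Z.mulVec θstar + w) k - Z.mulVec θhat k) ^ 2) +
          (∑ i, ρ |θhat i|) ≤
        (1 / (2 * n)) * (∑ k, ((Z.mulVec θstar + w) k - Z.mulVec θ k) ^ 2) +
          (∑ i, ρ |θ i|)) :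
    (∑ i, |θhat i - θstar i|) ≤
      (2 * ξ * (1 + ξ) / α ^ 2) * ν *
        ((Finset.univ.filter fun i => θstar i ≠ 0).card : ℝ) := by
  have hρ : SubadditivePenalty ρ := ⟨hρ0, hρmono, hρsub⟩
  set S := univ.filter fun i => θstar i ≠ 0
  have hS : ∀ i ∉ S, θstar i = 0 := fun i hi => by simpa [S] using hi
  have hξ0 : 0 ≤ ξ := hξ ▸ div_nonneg (by linarith) (by linarith)
  have hcone := hρ.cone_of_objective_le Z w hδ1 hξ hS θhat (hGW _) (hmin θstar)
  have hfit : 0 ≤ (1 / (2 * n)) * ∑ k, (Z *ᵥ (θhat - θstar)) k ^ 2 := by positivity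
  have hcurv := hRE (θhat - θstar) (by simp only [Pi.sub_apply]; linarith)
  simp only [Pi.sub_apply] at hcurv
  rw [show 1 / (n : ℝ) = 2 * (1 / (2 * n)) by ring, mul_assoc] at hcurv
  have hbound := sum_abs_le_of_cone_gap (fun i => θhat i - θstar i) (pow_pos hα 2)
    (C := ξ * (1 + ξ) * ν * #S) (by positivity) (by linarith)
    (hρ.sum_abs_mul_cone_gap_le S _ hν.le hρlin hξ0)
  calc ∑ i, |θhat i - θstar i| ≤ 2 * (ξ * (1 + ξ) * ν * #S) / α ^ 2 := hbound
    _ = 2 * ξ * (1 + ξ) / α ^ 2 * ν * #S := by ring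

/-- Fixed-design ℓ₁ deviation bound: under the Gaussian width condition with constant
`δ ∈ (0,1)` and the generalized restricted eigenvalue bound `α² > 0` over the cone with
parameter `ξ = (1+δ)/(1−δ)`, any global minimizer `θ̂` of the penalized least-squares
objective satisfies `‖θ̂ − θ*‖₁ ≤ (2ξ(1+ξ)/α²) ρ'(0+) ‖θ*‖₀`. -/
theorem stmt13 (n m : ℕ) (hn : 0 < n)
    (Z : Matrix (Fin n) (Fin m) ℝ) (w : Fin n → ℝ)
    (δ : ℝ) (hδ0 : 0 < δ) (hδ1 : δ < 1)
    (ρ : ℝ → ℝ) (hρ0 : ρ 0 = 0) (hρnn : ∀ x, 0 ≤ ρ x)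
    (hρsub : ∀ x y : ℝ, 0 ≤ x → 0 ≤ y → ρ (x + y) ≤ ρ x + ρ y)
    (hρmono : ∀ x y : ℝ, 0 ≤ x → x ≤ y → ρ x ≤ ρ y)
    (ν : ℝ) (hν : 0 < ν) (hρlin : ∀ x : ℝ, 0 ≤ x → ρ x ≤ ν * x)
    (θstar : Fin m → ℝ) (α ξ : ℝ)
    (hξ : ξ = (1 + δ) / (1 - δ)) (hα : 0 < α)
    (hGW : ∀ u : Fin m → ℝ,
      (1 / n) * |∑ k, w k * Z.mulVec u k| ≤
        δ * ((1 / (2 * n)) * (∑ k, (Z.mulVec u k) ^ 2) + ∑ i, ρ |u i|))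
    (hRE : ∀ u : Fin m → ℝ,
      (∑ i ∈ (Finset.univ.filter fun i => θstar i ≠ 0)ᶜ, ρ |u i|) ≤
          ξ * ∑ i ∈ Finset.univ.filter (fun i => θstar i ≠ 0), ρ |u i| →
        α ^ 2 * ∑ i, (u i) ^ 2 ≤ (1 / n) * ∑ k, (Z.mulVec u k) ^ 2)
    (θhat : Fin m → ℝ)
    (hmin : ∀ θ : Fin m → ℝ,
      (1 / (2 * n)) * (∑ k, ((Z.mulVec θstar + w) k - Z.mulVec θhat k) ^ 2) +
          (∑ i, ρ |θhat i|) ≤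
        (1 / (2 * n)) * (∑ k, ((Z.mulVec θstar + w) k - Z.mulVec θ k) ^ 2) +
          (∑ i, ρ |θ i|)) :
    (∑ i, |θhat i - θstar i|) ≤
      (2 * ξ * (1 + ξ) / α ^ 2) * ν *
        ((Finset.univ.filter fun i => θstar i ≠ 0).card : ℝ) :=
  stmt13_general n m Z w δ hδ0 hδ1 ρ hρ0 hρsub hρmono ν hν hρlin θstar α ξ hξ hα hGW hRE θhat hmin
end

section
/- Let θ̂ minimize F(θ) = (1/2n)‖y − Zθ‖₂² + ρ(θ) where ρ is a subadditive penalty with ρ(0) = 0, y = Zθ* + w, and Δ = θ̂ − θ*. Write Δ₁ for Δ restricted to S* = supp(θ*) and Δ₂ for the restriction to its complement. If (1/n)|⟨w, ZΔ⟩| ≤ δ[(1/2n)‖ZΔ‖₂² + ρ(Δ)] for some δ ∈ (0,1), then ρ(Δ₂) ≤ ξ ρ(Δ₁) with ξ = (1+δ)/(1−δ), i.e., Δ lies in the generalized restricted cone over S*. -/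
open Matrix Finset

/-- Cone membership of the error: if `θ̂` minimizes the penalized least-squares objective
and the Gaussian width condition holds at `u = Δ = θ̂ − θ*`, then
`ρ(Δ₂) ≤ ξ ρ(Δ₁)` with `ξ = (1+δ)/(1−δ)`, where `Δ₁`, `Δ₂` are the restrictions of `Δ` to
`S* = supp(θ*)` and its complement. -/
theorem stmt14 (n m : ℕ) (hn : 0 < n)
    (Z : Matrix (Fin n) (Fin m) ℝ) (w : Fin n → ℝ)
    (δ : ℝ) (hδ0 : 0 < δ) (hδ1 : δ < 1)
    (ρ : ℝ → ℝ) (hρ0 : ρ 0 = 0) (hρnn : ∀ x, 0 ≤ ρ x)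
    (hρsub : ∀ x y : ℝ, 0 ≤ x → 0 ≤ y → ρ (x + y) ≤ ρ x + ρ y)
    (hρmono : ∀ x y : ℝ, 0 ≤ x → x ≤ y → ρ x ≤ ρ y)
    (θstar θhat : Fin m → ℝ)
    (hmin : ∀ θ : Fin m → ℝ,
      (1 / (2 * n)) * (∑ k, ((Z.mulVec θstar + w) k - Z.mulVec θhat k) ^ 2) +
          (∑ i, ρ |θhat i|) ≤
        (1 / (2 * n)) * (∑ k, ((Z.mulVec θstar + w) k - Z.mulVec θ k) ^ 2) +
          (∑ i, ρ |θ i|))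
    (hGWΔ : (1 / n) * |∑ k, w k * Z.mulVec (θhat - θstar) k| ≤
        δ * ((1 / (2 * n)) * (∑ k, (Z.mulVec (θhat - θstar) k) ^ 2) +
          ∑ i, ρ |θhat i - θstar i|)) :
    (∑ i ∈ (Finset.univ.filter fun i => θstar i ≠ 0)ᶜ, ρ |θhat i - θstar i|) ≤
      ((1 + δ) / (1 - δ)) *
        ∑ i ∈ Finset.univ.filter (fun i => θstar i ≠ 0), ρ |θhat i - θstar i| := by
  have hnR : (0:ℝ) < (n:ℝ) := by exact_mod_cast hn
  set S := Finset.univ.filter (fun i => θstar i ≠ 0) with hS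
  set a : Fin n → ℝ := fun k => Z.mulVec (θhat - θstar) k with ha
  set T : ℝ := ∑ k, w k * a k with hT
  set Q : ℝ := (1 / (2 * (n:ℝ))) * ∑ k, (a k) ^ 2 with hQ
  set R : ℝ := ∑ i, ρ |θhat i - θstar i| with hR
  set R1 : ℝ := ∑ i ∈ S, ρ |θhat i - θstar i| with hR1
  set R2 : ℝ := ∑ i ∈ Sᶜ, ρ |θhat i - θstar i| with hR2
  have hQ0 : 0 ≤ Q := by
    apply mul_nonneg (by positivity)
    exact Finset.sum_nonneg fun k _ => sq_nonneg _
  have hRsplit : R = R1 + R2 := by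
    rw [hR, hR1, hR2, ← Finset.sum_add_sum_compl S]
  have hR10 : 0 ≤ R1 := Finset.sum_nonneg fun i _ => hρnn _
  have hR20 : 0 ≤ R2 := Finset.sum_nonneg fun i _ => hρnn _
  -- expand the optimality inequality
  have key := hmin θstar
  have e1 : ∀ k, ((Z.mulVec θstar + w) k - Z.mulVec θhat k) ^ 2
      = (w k) ^ 2 - 2 * (w k * a k) + (a k) ^ 2 := by
    intro k
    simp only [ha, Matrix.mulVec_sub, Pi.sub_apply, Pi.add_apply]
    ring
  have e2 : ∀ k, ((Z.mulVec θstar + w) k - Z.mulVec θstar k) ^ 2 = (w k) ^ 2 := by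
    intro k; simp
  rw [Finset.sum_congr rfl (fun k _ => e1 k), Finset.sum_congr rfl (fun k _ => e2 k)] at key
  rw [Finset.sum_add_distrib, Finset.sum_sub_distrib, ← Finset.mul_sum] at key
  -- key : (1/(2n)) * (∑ w² - 2T + ∑ a²) + Pθ̂ ≤ (1/(2n)) * ∑ w² + Pθ*
  have key2 : Q + (∑ i, ρ |θhat i|) ≤ (1 / (n:ℝ)) * T + ∑ i, ρ |θstar i| := by
    have hc : (1 / (2 * (n:ℝ))) * ((∑ k, (w k)^2) - 2 * T + ∑ k, (a k)^2)
        = (1 / (2 * (n:ℝ))) * (∑ k, (w k)^2) - (1/(n:ℝ)) * T + Q := by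
      rw [hQ, hT]; field_simp
    linarith [key, hc]
  have hTabs : (1 / (n:ℝ)) * T ≤ (1 / (n:ℝ)) * |T| := by
    apply mul_le_mul_of_nonneg_left (le_abs_self T) (by positivity)
  have hGW : (1 / (n:ℝ)) * |T| ≤ δ * (Q + R) := hGWΔ
  -- penalty decomposition
  have hPhat : (∑ i, ρ |θhat i|) = (∑ i ∈ S, ρ |θhat i|) + R2 := by
    rw [← Finset.sum_add_sum_compl S (fun i => ρ |θhat i|)]
    congr 1
    apply Finset.sum_congr rfl
    intro i hi
    simp only [hS, Finset.mem_compl, Finset.mem_filter, Finset.mem_univ, true_and,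
      not_not] at hi
    rw [hi, sub_zero]
  have hPstar : (∑ i, ρ |θstar i|) = ∑ i ∈ S, ρ |θstar i| := by
    rw [← Finset.sum_add_sum_compl S (fun i => ρ |θstar i|)]
    have : ∑ i ∈ Sᶜ, ρ |θstar i| = 0 := by
      apply Finset.sum_eq_zero
      intro i hi
      simp only [hS, Finset.mem_compl, Finset.mem_filter, Finset.mem_univ, true_and,
        not_not] at hi
      rw [hi, abs_zero, hρ0]
    rw [this, add_zero]
  have hS1 : ∑ i ∈ S, ρ |θstar i| ≤ (∑ i ∈ S, ρ |θhat i|) + R1 := by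
    rw [hR1, ← Finset.sum_add_distrib]
    apply Finset.sum_le_sum
    intro i _
    have h1 : |θstar i| ≤ |θhat i| + |θhat i - θstar i| := by
      have := abs_sub_abs_le_abs_sub (θhat i) (θstar i)
      have h2 := abs_sub (θhat i) (θstar i)
      calc |θstar i| = |θhat i - (θhat i - θstar i)| := by ring_nf
        _ ≤ |θhat i| + |θhat i - θstar i| := abs_sub _ _
    calc ρ |θstar i| ≤ ρ (|θhat i| + |θhat i - θstar i|) :=
          hρmono _ _ (abs_nonneg _) h1
      _ ≤ ρ |θhat i| + ρ |θhat i - θstar i| :=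
          hρsub _ _ (abs_nonneg _) (abs_nonneg _)
  -- combine
  have hfinal : R2 - R1 ≤ δ * (R1 + R2) := by
    have := key2
    rw [hPhat, hPstar] at this
    have chain : Q + ((∑ i ∈ S, ρ |θhat i|) + R2) ≤ δ * (Q + R) + ∑ i ∈ S, ρ |θstar i| :=
      le_trans this (by linarith [le_trans hTabs hGW])
    rw [hRsplit] at chain
    nlinarith [hS1, hQ0]
  have h1δ : (0:ℝ) < 1 - δ := by linarith
  show R2 ≤ ((1 + δ) / (1 - δ)) * R1
  rw [div_mul_eq_mul_div, le_div_iff₀ h1δ]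
  linarith [hfinal]
end
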